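/- There is a natural bijection between the group of characters and the Lie algebra of infinitesimal characters on \bar{T}(T(J)) given by the left half-shuffle fixed point equation: for every character \phi there exists a unique infinitesimal character \kappa such that \phi = \varepsilon + \kappa \prec \phi (equivalently \phi = \exp^{\prec}(\kappa)); conversely, for every infinitesimal character \kappa, the linear form \exp^{\prec}(\kappa) := \varepsilon + \sum_{n>0} \kappa^{\prec n} is a character. -/

import Mathlib

/-!
For an infinitesimal character `κ`, only the term `1 ⊗ m` of `δ(m)` pairs nontrivially with
`κ`, so on a monomial `w|m` (with `w` a word) the fixed point equation `ψ = ε + κ ≺ ψ` reads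
`ψ(w|m) = ∑_{0 ∈ S} κ(w_S) ψ(w_{J_1}|⋯|w_{J_k}|m)`, and every monomial on the right has
smaller degree than `w|m`. Hence for given `κ` the equation has exactly one solution, namely
`exp^≺(κ)` (its partial sums stabilise degreewise), and the same recursion shows by induction
on the degree that the solution is multiplicative. Conversely, for a character `φ` the term
`S = {0, …, n-1}` of the equation at a word `w` is `κ(w)` itself, so the equation determines
`κ` on words recursively in their length; extending by zero on bar products gives an
infinitesimal character, and multiplicativity of `φ` turns the equation at `w|m` into the
equation at `w` times `φ(m)`.
-/

open scoped TensorProduct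

noncomputable section
attribute [local instance] Classical.propDecidable

/-- Nonempty words over the alphabet `J`. -/
abbrev Word (J : Type) := {l : List J // l ≠ []}

/-- The double tensor algebra `T̄(T(J))` with the bar (concatenation) product. -/
abbrev DT (K : Type) [Field K] (J : Type) := MonoidAlgebra K (FreeMonoid (Word J))

variable (K : Type) [Field K] (J : Type)

def wordElem (w : List J) : DT K J :=
  if h : w = [] then 1 else MonoidAlgebra.single (FreeMonoid.of (⟨w, h⟩ : Word J)) 1

def subword (w : List J) (S : Finset ℕ) : List J :=
  (S.sort (· ≤ ·)).filterMap (fun i => w[i]?)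

def runs : List ℕ → List (List ℕ)
  | [] => []
  | a :: rest =>
    match runs rest with
    | [] => [[a]]
    | r :: rs => if a + 1 = r.headD 0 then (a :: r) :: rs else [a] :: r :: rs

def comps (n : ℕ) (S : Finset ℕ) : List (List ℕ) :=
  runs ((List.range n).filter (fun i => decide (i ∉ S)))

def barElem (ws : List (List J)) : DT K J := (ws.map (wordElem K J)).prod

/-- The coproduct `δ` on a single word. -/
def deltaWord (w : List J) : DT K J ⊗[K] DT K J :=
  ∑ S ∈ (Finset.range w.length).powerset,
    wordElem K J (subword J w S) ⊗ₜ[K]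
      barElem K J ((comps w.length S).map (fun c => c.filterMap (fun i => w[i]?)))

/-- The coproduct `δ`, extended multiplicatively. -/
def delta : DT K J →ₐ[K] (DT K J ⊗[K] DT K J) :=
  MonoidAlgebra.lift K _ (FreeMonoid (Word J)) (FreeMonoid.lift (fun a => deltaWord K J a.1))

/-- The counit `ε`. -/
def counit : DT K J →ₐ[K] K :=
  MonoidAlgebra.lift K K (FreeMonoid (Word J)) (FreeMonoid.lift (fun _ => (0 : K)))

/-- Basis-linear extension of a function on the basis of `T̄(T(J))`. -/
def extend {M : Type} [AddCommMonoid M] [Module K M] (f : FreeMonoid (Word J) → M) :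
    DT K J →ₗ[K] M :=
  (Finsupp.lift M K (FreeMonoid (Word J)) f).comp (MonoidAlgebra.coeffLinearEquiv K).toLinearMap

/-- The left half-unshuffle `δ_≺` on a word: the partial sum over subsets containing
the first letter. -/
def deltaPrecWord (w : List J) : DT K J ⊗[K] DT K J :=
  ∑ S ∈ ((Finset.range w.length).powerset.filter (fun S => 0 ∈ S)),
    wordElem K J (subword J w S) ⊗ₜ[K]
      barElem K J ((comps w.length S).map (fun c => c.filterMap (fun i => w[i]?)))

/-- The right half-unshuffle `δ_≻` on a word: the partial sum over subsets not containing
the first letter. -/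
def deltaSuccWord (w : List J) : DT K J ⊗[K] DT K J :=
  ∑ S ∈ ((Finset.range w.length).powerset.filter (fun S => 0 ∉ S)),
    wordElem K J (subword J w S) ⊗ₜ[K]
      barElem K J ((comps w.length S).map (fun c => c.filterMap (fun i => w[i]?)))

/-- `δ_≺` extended to `T̄(T(J))` by `δ_≺(w₁|⋯|w_m) = δ_≺(w₁)δ(w₂)⋯δ(w_m)`. -/
def deltaPrec : DT K J →ₗ[K] DT K J ⊗[K] DT K J :=
  extend K J (fun g =>
    match FreeMonoid.toList g with
    | [] => 0
    | a :: as => deltaPrecWord K J a.1 * delta K J (MonoidAlgebra.single (FreeMonoid.ofList as) 1))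

/-- `δ_≻` extended to `T̄(T(J))` by `δ_≻(w₁|⋯|w_m) = δ_≻(w₁)δ(w₂)⋯δ(w_m)`. -/
def deltaSucc : DT K J →ₗ[K] DT K J ⊗[K] DT K J :=
  extend K J (fun g =>
    match FreeMonoid.toList g with
    | [] => 0
    | a :: as => deltaSuccWord K J a.1 * delta K J (MonoidAlgebra.single (FreeMonoid.ofList as) 1))


/-- Convolution product `α ⋆ β = m_K ∘ (α ⊗ β) ∘ δ` on linear forms. -/
def conv (α β : DT K J →ₗ[K] K) : DT K J →ₗ[K] K :=
  (LinearMap.mul' K K).comp ((TensorProduct.map α β).comp (delta K J).toLinearMap)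

/-- Left half-shuffle `α ≺ β = m_K ∘ (α ⊗ β) ∘ δ_≺` on linear forms. -/
def cprec (α β : DT K J →ₗ[K] K) : DT K J →ₗ[K] K :=
  (LinearMap.mul' K K).comp ((TensorProduct.map α β).comp (deltaPrec K J))

/-- Right half-shuffle `α ≻ β = m_K ∘ (α ⊗ β) ∘ δ_≻` on linear forms. -/
def csucc (α β : DT K J →ₗ[K] K) : DT K J →ₗ[K] K :=
  (LinearMap.mul' K K).comp ((TensorProduct.map α β).comp (deltaSucc K J))

/-- The counit as a linear form. -/
def epsL : DT K J →ₗ[K] K := (counit K J).toLinearMap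


/-- The degree (total word length) of a basis element of `T̄(T(J))`. -/
def deg (g : FreeMonoid (Word J)) : ℕ := ((FreeMonoid.toList g).map (fun a => a.1.length)).sum

/-- Iterated left half-shuffle powers `x^{≺n}`. -/
def precPow (x : DT K J →ₗ[K] K) : ℕ → (DT K J →ₗ[K] K)
  | 0 => epsL K J
  | n + 1 => cprec K J x (precPow x n)

/-- Iterated right half-shuffle powers `x^{≻n}`. -/
def succPow (x : DT K J →ₗ[K] K) : ℕ → (DT K J →ₗ[K] K)
  | 0 => epsL K J
  | n + 1 => csucc K J (succPow x n) x

/-- Iterated convolution powers `x^{⋆n}`. -/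
def starPow (x : DT K J →ₗ[K] K) : ℕ → (DT K J →ₗ[K] K)
  | 0 => epsL K J
  | n + 1 => conv K J x (starPow x n)

/-- The ordered exponential `exp^≺(x) = ε + ∑_{n>0} x^{≺n}`, defined degreewise
(on a homogeneous component of degree `d` only the terms with `n ≤ d` contribute). -/
def expPrec (x : DT K J →ₗ[K] K) : DT K J →ₗ[K] K :=
  extend K J (fun g =>
    ∑ n ∈ Finset.range (deg J g + 1), precPow K J x n (MonoidAlgebra.single g 1))

/-- The ordered exponential `exp^≻(x) = ε + ∑_{n>0} x^{≻n}`, defined degreewise. -/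
def expSucc (x : DT K J →ₗ[K] K) : DT K J →ₗ[K] K :=
  extend K J (fun g =>
    ∑ n ∈ Finset.range (deg J g + 1), succPow K J x n (MonoidAlgebra.single g 1))


/-- A character on `T̄(T(J))`: a unital, multiplicative linear form. -/
def IsChar (φ : DT K J →ₗ[K] K) : Prop :=
  φ 1 = 1 ∧ ∀ a b : DT K J, φ (a * b) = φ a * φ b

/-- An infinitesimal character on `T̄(T(J))`: a linear form vanishing on the unit and on
all bar products of elements of `T(T(J))` (the augmentation ideal). -/
def IsInfChar (κ : DT K J →ₗ[K] K) : Prop :=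
  κ 1 = 0 ∧ ∀ a b : DT K J, counit K J a = 0 → counit K J b = 0 → κ (a * b) = 0

open MonoidAlgebra TensorProduct

section Words

variable {J : Type}

theorem runs_flatten (l : List ℕ) : (runs l).flatten = l := by
  induction l with
  | nil => rfl
  | cons a rest ih =>
    rw [runs]
    rcases h : runs rest with _ | ⟨r, rs⟩ <;> rw [h] at ih
    · simp [← ih]
    · dsimp only
      split_ifs <;> simp [← ih]

theorem runs_range' (a : ℕ) {n : ℕ} (hn : 0 < n) :
    runs (List.range' a n) = [List.range' a n] := by
  induction n generalizing a with
  | zero => omega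
  | succ n ih =>
    rw [List.range'_succ, runs]
    rcases Nat.eq_zero_or_pos n with rfl | hn'
    · simp [runs]
    · obtain ⟨m, rfl⟩ := Nat.exists_eq_succ_of_ne_zero hn'.ne'
      rw [ih (a + 1) hn']
      simp [List.range'_succ]

theorem comps_flatten (n : ℕ) (S : Finset ℕ) :
    (comps n S).flatten = (List.range n).filter (fun i => decide (i ∉ S)) :=
  runs_flatten _

theorem lt_of_mem_comps {n : ℕ} {S : Finset ℕ} {c : List ℕ} (hc : c ∈ comps n S) {i : ℕ}
    (hi : i ∈ c) : i < n := by
  have : i ∈ (comps n S).flatten := List.mem_flatten.2 ⟨c, hc, hi⟩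
  rw [comps_flatten, List.mem_filter, List.mem_range] at this
  exact this.1

theorem comps_range (n : ℕ) : comps n (Finset.range n) = [] := by
  rw [comps, List.filter_eq_nil_iff.2 (by simp), runs]

theorem comps_empty {n : ℕ} (hn : 0 < n) : comps n ∅ = [List.range n] := by
  simp [comps, List.range_eq_range', runs_range' 0 hn]

theorem length_filter_range_notMem (n : ℕ) {S : Finset ℕ} (hS : S ⊆ Finset.range n) :
    ((List.range n).filter (fun i => decide (i ∉ S))).length = n - S.card := by
  rw [← List.toFinset_card_of_nodup (List.nodup_range.filter _), List.toFinset_filter,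
    List.toFinset_range]
  simp only [decide_eq_true_eq, Finset.filter_notMem_eq_sdiff, Finset.card_sdiff_of_subset hS,
    Finset.card_range]

theorem length_filterMap_getElem? (w : List J) {l : List ℕ} (h : ∀ i ∈ l, i < w.length) :
    (l.filterMap (fun i => w[i]?)).length = l.length := by
  induction l with
  | nil => rfl
  | cons a t ih =>
    rw [List.filterMap_cons, List.getElem?_eq_getElem (h a List.mem_cons_self)]
    simp [ih (fun i hi => h i (List.mem_cons_of_mem a hi))]

theorem filterMap_range_getElem? (w : List J) :
    (List.range w.length).filterMap (fun i => w[i]?) = w := by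
  induction w with
  | nil => rfl
  | cons a t ih =>
    rw [List.length_cons, List.range_succ_eq_map, List.filterMap_cons, List.filterMap_map]
    simpa [Function.comp_def] using ih

theorem subword_empty (w : List J) : subword J w ∅ = [] := by
  simp [subword]

theorem subword_range (w : List J) : subword J w (Finset.range w.length) = w := by
  rw [subword, Finset.sort_range, filterMap_range_getElem?]

theorem length_subword (w : List J) {S : Finset ℕ} (hS : S ⊆ Finset.range w.length) :
    (subword J w S).length = S.card := by
  rw [subword, length_filterMap_getElem?, Finset.length_sort]
  intro i hi
  exact Finset.mem_range.1 (hS ((Finset.mem_sort _).1 hi))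

theorem subword_ne_nil (w : List J) {S : Finset ℕ} (hS : S ⊆ Finset.range w.length)
    (h : S.Nonempty) : subword J w S ≠ [] := by
  rw [← List.length_pos_iff, length_subword w hS]
  exact h.card_pos

theorem length_subword_lt {w : List J} {S : Finset ℕ} (hS : S ⊂ Finset.range w.length) :
    (subword J w S).length < w.length := by
  simpa [length_subword w hS.subset] using Finset.card_lt_card hS

/-- The words `j_{J_1}, …, j_{J_k}` read off the maximal runs of positions outside `S`. -/
def gapWords (w : List J) (S : Finset ℕ) : List (List J) :=
  (comps w.length S).map (fun c => c.filterMap (fun i => w[i]?))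

theorem gapWords_range (w : List J) : gapWords w (Finset.range w.length) = [] := by
  simp [gapWords, comps_range]

theorem gapWords_empty {w : List J} (hw : w ≠ []) : gapWords w ∅ = [w] := by
  simp [gapWords, comps_empty (List.length_pos_iff.2 hw), filterMap_range_getElem?]

theorem sum_length_gapWords (w : List J) {S : Finset ℕ} (hS : S ⊆ Finset.range w.length) :
    ((gapWords w S).map List.length).sum = w.length - S.card := by
  rw [gapWords, List.map_map, ← length_filter_range_notMem _ hS, ← comps_flatten,
    List.length_flatten]
  congr 1
  refine List.map_congr_left fun c hc => ?_
  exact length_filterMap_getElem? w fun i hi => lt_of_mem_comps hc hi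

def precIndex (n : ℕ) : Finset (Finset ℕ) :=
  (Finset.range n).powerset.filter (fun S => 0 ∈ S)

theorem mem_precIndex {n : ℕ} {S : Finset ℕ} :
    S ∈ precIndex n ↔ S ⊆ Finset.range n ∧ 0 ∈ S := by
  rw [precIndex, Finset.mem_filter, Finset.mem_powerset]

end Words

section Basis

variable {K : Type} [Field K] {J : Type}

theorem linearForm_ext {ψ₁ ψ₂ : DT K J →ₗ[K] K}
    (h : ∀ g, ψ₁ (single g 1) = ψ₂ (single g 1)) : ψ₁ = ψ₂ :=
  lhom_ext' fun g => LinearMap.ext_ring (h g)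

theorem extend_single {M : Type} [AddCommMonoid M] [Module K M]
    (f : FreeMonoid (Word J) → M) (g : FreeMonoid (Word J)) (c : K) :
    extend K J f (single g c) = c • f g := by
  change Finsupp.lift M K _ f (Finsupp.single g c) = _
  simp

theorem wordElem_nil : wordElem K J [] = 1 := by simp [wordElem]

theorem wordElem_of_ne_nil {w : List J} (h : w ≠ []) :
    wordElem K J w = single (FreeMonoid.of (⟨w, h⟩ : Word J)) 1 := by
  simp [wordElem, h]

theorem wordElem_val (a : Word J) : wordElem K J a.1 = single (FreeMonoid.of a) 1 :=
  wordElem_of_ne_nil a.2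

/-- The monomial `w₁|⋯|wₖ`; empty words are dropped, as `wordElem` sends them to `1`. -/
def barMon (ws : List (List J)) : FreeMonoid (Word J) :=
  FreeMonoid.ofList (ws.filterMap (fun w => if h : w = [] then none else some ⟨w, h⟩))

theorem barMon_cons_nil (ws : List (List J)) : barMon ([] :: ws) = barMon ws := by
  simp [barMon]

theorem barMon_cons {w : List J} (h : w ≠ []) (ws : List (List J)) :
    barMon (w :: ws) = FreeMonoid.of ⟨w, h⟩ * barMon ws := by
  simp [barMon, h, FreeMonoid.ofList_cons]

theorem barElem_eq_single (ws : List (List J)) :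
    barElem K J ws = single (barMon ws) 1 := by
  induction ws with
  | nil => simp [barElem, barMon, one_def]
  | cons w ws ih =>
    have hcons : barElem K J (w :: ws) = wordElem K J w * barElem K J ws := by simp [barElem]
    rw [hcons, ih]
    by_cases h : w = []
    · rw [h, wordElem_nil, one_mul, barMon_cons_nil]
    · rw [wordElem_of_ne_nil h, single_mul_single, one_mul, barMon_cons h]

theorem deg_one : deg J (1 : FreeMonoid (Word J)) = 0 := rfl

theorem deg_mul (g h : FreeMonoid (Word J)) : deg J (g * h) = deg J g + deg J h := by
  simp [deg, FreeMonoid.toList_mul]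

theorem deg_of (a : Word J) : deg J (FreeMonoid.of a) = a.1.length := by
  simp [deg]

theorem deg_barMon (ws : List (List J)) : deg J (barMon ws) = (ws.map List.length).sum := by
  induction ws with
  | nil => rfl
  | cons w ws ih =>
    by_cases h : w = []
    · simpa [h, barMon_cons_nil] using ih
    · rw [barMon_cons h, deg_mul, deg_of, ih, List.map_cons, List.sum_cons]

theorem FreeMonoid.of_mul_ne_one {α : Type} (a : α) (m : FreeMonoid α) :
    FreeMonoid.of a * m ≠ 1 :=
  fun h => by simpa using congrArg FreeMonoid.length h

theorem counit_apply_single (g : FreeMonoid (Word J)) (c : K) :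
    counit K J (single g c) = if g = 1 then c else 0 := by
  rw [counit, lift_single]
  cases g using FreeMonoid.casesOn with
  | one => simp
  | of_mul a m => simp

theorem epsL_apply_single (g : FreeMonoid (Word J)) (c : K) :
    epsL K J (single g c) = if g = 1 then c else 0 :=
  counit_apply_single g c

end Basis

section Counit

variable {K : Type} [Field K] {J : Type}

theorem deltaWord_eq_sum (w : List J) :
    deltaWord K J w = ∑ S ∈ (Finset.range w.length).powerset,
      wordElem K J (subword J w S) ⊗ₜ barElem K J (gapWords w S) := rfl

theorem deltaPrecWord_eq_sum (w : List J) :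
    deltaPrecWord K J w = ∑ S ∈ precIndex w.length,
      wordElem K J (subword J w S) ⊗ₜ barElem K J (gapWords w S) := rfl

theorem counit_wordElem (w : List J) :
    counit K J (wordElem K J w) = if w = [] then 1 else 0 := by
  by_cases h : w = []
  · simp [h, wordElem_nil]
  · simp [wordElem_of_ne_nil h, counit_apply_single, h]

theorem delta_single_of (a : Word J) :
    delta K J (single (FreeMonoid.of a) 1) = deltaWord K J a.1 := by
  rw [delta, lift_single, one_smul, FreeMonoid.lift_eval_of]

theorem map_counit_deltaWord {w : List J} (hw : w ≠ []) :
    Algebra.TensorProduct.map (counit K J) (AlgHom.id K (DT K J)) (deltaWord K J w)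
      = 1 ⊗ₜ wordElem K J w := by
  rw [deltaWord_eq_sum, map_sum, Finset.sum_eq_single ∅]
  · rw [Algebra.TensorProduct.map_tmul, subword_empty, wordElem_nil, map_one,
      gapWords_empty hw, barElem_eq_single, barMon_cons hw, barMon, wordElem_of_ne_nil hw]
    simp
  · intro S hS hne
    rw [Algebra.TensorProduct.map_tmul, counit_wordElem,
      if_neg (subword_ne_nil w (Finset.mem_powerset.1 hS) (Finset.nonempty_iff_ne_empty.2 hne)),
      zero_tmul]
  · exact fun h => absurd (Finset.empty_mem_powerset _) h

theorem map_counit_comp_delta :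
    (Algebra.TensorProduct.map (counit K J) (AlgHom.id K (DT K J))).comp (delta K J)
      = Algebra.TensorProduct.includeRight :=
  algHom_ext' (FreeMonoid.hom_eq fun a => by
      simp [delta_single_of, map_counit_deltaWord a.2, wordElem_of_ne_nil a.2])
    (Subsingleton.elim _ _)

theorem mul'_map_counit_delta (α : DT K J →ₗ[K] K) (x : DT K J) :
    LinearMap.mul' K K (map (epsL K J) α (delta K J x)) = α x := by
  have hε : map (epsL K J) LinearMap.id (delta K J x) = (1 : K) ⊗ₜ x :=
    congr($(map_counit_comp_delta (K := K) (J := J)) x)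
  have hsplit : map (epsL K J) α = map LinearMap.id α ∘ₗ map (epsL K J) LinearMap.id := by
    rw [← map_comp, LinearMap.id_comp, LinearMap.comp_id]
  rw [hsplit, LinearMap.comp_apply, hε]
  simp

end Counit

section InfChar

variable {K : Type} [Field K] {J : Type}

/-- Writing `a = ε(a) + a'` with `a'` in the augmentation ideal, a form killing `1` and
products of augmentation elements is an `ε`-derivation. -/
theorem map_mul_eq_of_vanishes_on_augmentation_sq {A : Type} [Ring A] [Algebra K A]
    (ε : A →ₐ[K] K) {κ : A →ₗ[K] K} (h1 : κ 1 = 0)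
    (h2 : ∀ a b, ε a = 0 → ε b = 0 → κ (a * b) = 0) (a b : A) :
    κ (a * b) = ε a * κ b + κ a * ε b := by
  have h := h2 (a - algebraMap K A (ε a)) (b - algebraMap K A (ε b)) (by simp) (by simp)
  simp only [sub_mul, mul_sub, Algebra.algebraMap_eq_smul_one, smul_mul_assoc, mul_smul_comm,
    one_mul, mul_one, map_sub, map_smul, smul_eq_mul, h1] at h
  linear_combination h

theorem IsInfChar.map_mul {κ : DT K J →ₗ[K] K} (hκ : IsInfChar K J κ) (a b : DT K J) :
    κ (a * b) = counit K J a * κ b + κ a * counit K J b :=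
  map_mul_eq_of_vanishes_on_augmentation_sq (counit K J) hκ.1 hκ.2 a b

theorem IsInfChar.map_wordElem_mul {κ : DT K J →ₗ[K] K} (hκ : IsInfChar K J κ) {w : List J}
    (hw : w ≠ []) (x : DT K J) :
    κ (wordElem K J w * x) = κ (wordElem K J w) * counit K J x := by
  rw [hκ.map_mul, counit_wordElem, if_neg hw, zero_mul, zero_add]

theorem IsInfChar.map_single_of_mul {κ : DT K J →ₗ[K] K} (hκ : IsInfChar K J κ) (a : Word J)
    {m : FreeMonoid (Word J)} (hm : m ≠ 1) : κ (single (FreeMonoid.of a * m) 1) = 0 := by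
  rw [← one_mul (1 : K), ← single_mul_single]
  exact hκ.2 _ _ (by simp [counit_apply_single, FreeMonoid.of_ne_one])
    (by simp [counit_apply_single, hm])

theorem isInfChar_of_single {κ : DT K J →ₗ[K] K} (h1 : κ (single 1 1) = 0)
    (h2 : ∀ g h, g ≠ 1 → h ≠ 1 → κ (single (g * h) 1) = 0) : IsInfChar K J κ := by
  have leibniz : ∀ a b : DT K J, κ (a * b) = counit K J a * κ b + κ a * counit K J b := by
    intro a b
    induction a using induction_on with
    | add x y hx hy => simp only [add_mul, map_add, hx, hy]; ring
    | smul r x hx => simp only [smul_mul_assoc, map_smul, hx, smul_eq_mul]; ring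
    | of g =>
      induction b using induction_on with
      | add x y hx hy => simp only [mul_add, map_add, hx, hy]; ring
      | smul r x hx => simp only [mul_smul_comm, map_smul, hx, smul_eq_mul]; ring
      | of h =>
        simp only [of_apply, single_mul_single, one_mul, counit_apply_single]
        by_cases hg : g = 1 <;> by_cases hh : h = 1 <;> simp [hg, hh, h1, h2]
  refine ⟨by rwa [one_def], fun a b ha hb => ?_⟩
  rw [leibniz, ha, hb, zero_mul, mul_zero, add_zero]

theorem IsInfChar.ext {κ₁ κ₂ : DT K J →ₗ[K] K} (h₁ : IsInfChar K J κ₁)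
    (h₂ : IsInfChar K J κ₂)
    (h : ∀ a : Word J, κ₁ (single (FreeMonoid.of a) 1) = κ₂ (single (FreeMonoid.of a) 1)) :
    κ₁ = κ₂ := by
  refine linearForm_ext fun g => ?_
  cases g using FreeMonoid.casesOn with
  | one => rw [← one_def, h₁.1, h₂.1]
  | of_mul a m =>
    by_cases hm : m = 1
    · rw [hm, mul_one, h a]
    · rw [h₁.map_single_of_mul a hm, h₂.map_single_of_mul a hm]

end InfChar

section HalfShuffle

variable {K : Type} [Field K] {J : Type}

theorem deltaPrec_single_one : deltaPrec K J (single 1 1) = 0 := by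
  rw [deltaPrec, extend_single, one_smul]
  rfl

theorem deltaPrec_single_of_mul (a : Word J) (m : FreeMonoid (Word J)) :
    deltaPrec K J (single (FreeMonoid.of a * m) 1)
      = deltaPrecWord K J a.1 * delta K J (single m 1) := by
  rw [deltaPrec, extend_single, one_smul]
  rfl

theorem cprec_single_one (κ ψ : DT K J →ₗ[K] K) : cprec K J κ ψ (single 1 1) = 0 := by
  rw [cprec, LinearMap.comp_apply, LinearMap.comp_apply, deltaPrec_single_one, map_zero,
    map_zero]

/-- Against an infinitesimal `κ` on the left, only the term `1 ⊗ m` of `δ(m)` survives. -/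
theorem IsInfChar.mul'_map_tmul_mul_delta {κ : DT K J →ₗ[K] K} (hκ : IsInfChar K J κ)
    (ψ : DT K J →ₗ[K] K) {w : List J} (hw : w ≠ []) (v m : DT K J) :
    LinearMap.mul' K K (map κ ψ ((wordElem K J w ⊗ₜ v) * delta K J m))
      = κ (wordElem K J w) * ψ (v * m) := by
  have key : ∀ t : DT K J ⊗[K] DT K J,
      LinearMap.mul' K K (map κ ψ ((wordElem K J w ⊗ₜ v) * t))
        = κ (wordElem K J w)
          * LinearMap.mul' K K (map (epsL K J) (ψ ∘ₗ LinearMap.mulLeft K v) t) := by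
    intro t
    induction t with
    | zero => simp
    | add x y hx hy => rw [mul_add, map_add, map_add, map_add, map_add, hx, hy, mul_add]
    | tmul x y =>
      simp only [Algebra.TensorProduct.tmul_mul_tmul, map_tmul, LinearMap.mul'_apply,
        hκ.map_wordElem_mul hw, LinearMap.comp_apply, LinearMap.mulLeft_apply]
      rw [epsL, AlgHom.toLinearMap_apply]
      ring
  rw [key, mul'_map_counit_delta, LinearMap.comp_apply, LinearMap.mulLeft_apply]

theorem IsInfChar.cprec_single_of_mul {κ : DT K J →ₗ[K] K} (hκ : IsInfChar K J κ)
    (ψ : DT K J →ₗ[K] K) (a : Word J) (m : FreeMonoid (Word J)) :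
    cprec K J κ ψ (single (FreeMonoid.of a * m) 1)
      = ∑ S ∈ precIndex a.1.length,
          κ (wordElem K J (subword J a.1 S)) * ψ (single (barMon (gapWords a.1 S) * m) 1) := by
  rw [cprec, LinearMap.comp_apply, LinearMap.comp_apply, deltaPrec_single_of_mul,
    deltaPrecWord_eq_sum, Finset.sum_mul, map_sum, map_sum]
  refine Finset.sum_congr rfl fun S hS => ?_
  obtain ⟨hsub, h0⟩ := mem_precIndex.1 hS
  rw [hκ.mul'_map_tmul_mul_delta ψ (subword_ne_nil a.1 hsub ⟨0, h0⟩), barElem_eq_single,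
    single_mul_single, one_mul]

theorem range_mem_precIndex {n : ℕ} (hn : 0 < n) : Finset.range n ∈ precIndex n :=
  mem_precIndex.2 ⟨subset_rfl, Finset.mem_range.2 hn⟩

/-- The term `S = {0, …, n-1}` of `δ_≺(w)` is `w ⊗ 1`. -/
theorem IsInfChar.cprec_wordElem {κ ψ : DT K J →ₗ[K] K} (hκ : IsInfChar K J κ)
    (hψ : ψ (single 1 1) = 1) {w : List J} (hw : w ≠ []) :
    cprec K J κ ψ (wordElem K J w)
      = κ (wordElem K J w) + ∑ S ∈ (precIndex w.length).erase (Finset.range w.length),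
          κ (wordElem K J (subword J w S)) * ψ (single (barMon (gapWords w S)) 1) := by
  rw [wordElem_of_ne_nil hw, ← mul_one (FreeMonoid.of _), hκ.cprec_single_of_mul,
    ← Finset.add_sum_erase _ _ (range_mem_precIndex (List.length_pos_iff.2 hw))]
  simp only [mul_one, subword_range, gapWords_range, barMon, List.filterMap_nil,
    FreeMonoid.ofList_nil, hψ, wordElem_of_ne_nil hw]

theorem IsInfChar.cprec_single_of_mul_of_isChar {κ φ : DT K J →ₗ[K] K}
    (hκ : IsInfChar K J κ) (hφ : IsChar K J φ) (a : Word J) (m : FreeMonoid (Word J)) :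
    cprec K J κ φ (single (FreeMonoid.of a * m) 1)
      = cprec K J κ φ (single (FreeMonoid.of a) 1) * φ (single m 1) := by
  rw [hκ.cprec_single_of_mul, ← mul_one (FreeMonoid.of a), hκ.cprec_single_of_mul,
    Finset.sum_mul]
  refine Finset.sum_congr rfl fun S _ => ?_
  rw [mul_one, mul_assoc, ← hφ.2, single_mul_single, one_mul]

theorem deg_barMon_gapWords_mul_lt (a : Word J) {S : Finset ℕ} (hS : S ∈ precIndex a.1.length)
    (m : FreeMonoid (Word J)) :
    deg J (barMon (gapWords a.1 S) * m) < deg J (FreeMonoid.of a * m) := by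
  obtain ⟨hsub, h0⟩ := mem_precIndex.1 hS
  rw [deg_mul, deg_mul, deg_of, deg_barMon, sum_length_gapWords a.1 hsub]
  have hcard : 0 < S.card := Finset.card_pos.2 ⟨0, h0⟩
  have hlen : 0 < a.1.length := List.length_pos_iff.2 a.2
  omega

end HalfShuffle

section FixedPoint

variable {K : Type} [Field K] {J : Type}

theorem deg_induction {P : FreeMonoid (Word J) → Prop} (one : P 1)
    (of_mul : ∀ a m, (∀ g, deg J g < deg J (FreeMonoid.of a * m) → P g) →
      P (FreeMonoid.of a * m))
    (g : FreeMonoid (Word J)) : P g := by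
  induction hn : deg J g using Nat.strong_induction_on generalizing g with
  | _ n ih =>
    cases g using FreeMonoid.casesOn with
    | one => exact one
    | of_mul a m => exact of_mul a m fun g hg => ih _ (hn ▸ hg) g rfl

theorem isChar_of_single {φ : DT K J →ₗ[K] K} (h1 : φ (single 1 1) = 1)
    (hmul : ∀ g h, φ (single (g * h) 1) = φ (single g 1) * φ (single h 1)) :
    IsChar K J φ := by
  let f : FreeMonoid (Word J) →* K :=
    { toFun := fun g => φ (single g 1), map_one' := h1, map_mul' := hmul }
  have hφ : φ = (MonoidAlgebra.lift K K (FreeMonoid (Word J)) f).toLinearMap :=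
    linearForm_ext fun g => by simp [f]
  rw [hφ]
  exact ⟨map_one (MonoidAlgebra.lift K K _ f), map_mul (MonoidAlgebra.lift K K _ f)⟩

def PrecFixedPoint (κ ψ : DT K J →ₗ[K] K) : Prop :=
  ψ = epsL K J + cprec K J κ ψ

variable {κ ψ : DT K J →ₗ[K] K}

theorem PrecFixedPoint.apply_single_one (hψ : PrecFixedPoint κ ψ) : ψ (single 1 1) = 1 := by
  rw [hψ, LinearMap.add_apply, cprec_single_one, add_zero, epsL_apply_single, if_pos rfl]

theorem PrecFixedPoint.apply_single_of_mul (hκ : IsInfChar K J κ) (hψ : PrecFixedPoint κ ψ)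
    (a : Word J) (m : FreeMonoid (Word J)) :
    ψ (single (FreeMonoid.of a * m) 1)
      = ∑ S ∈ precIndex a.1.length,
          κ (wordElem K J (subword J a.1 S)) * ψ (single (barMon (gapWords a.1 S) * m) 1) := by
  conv_lhs => rw [hψ]
  rw [LinearMap.add_apply, epsL_apply_single,
    if_neg (FreeMonoid.of_mul_ne_one a m), zero_add, hκ.cprec_single_of_mul]

theorem PrecFixedPoint.unique (hκ : IsInfChar K J κ) {ψ₁ ψ₂ : DT K J →ₗ[K] K}
    (h₁ : PrecFixedPoint κ ψ₁) (h₂ : PrecFixedPoint κ ψ₂) : ψ₁ = ψ₂ := by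
  refine linearForm_ext (deg_induction ?_ fun a m ih => ?_)
  · rw [h₁.apply_single_one, h₂.apply_single_one]
  · rw [h₁.apply_single_of_mul hκ, h₂.apply_single_of_mul hκ]
    refine Finset.sum_congr rfl fun S hS => ?_
    rw [ih _ (deg_barMon_gapWords_mul_lt a hS m)]

theorem PrecFixedPoint.isChar (hκ : IsInfChar K J κ) (hψ : PrecFixedPoint κ ψ) :
    IsChar K J ψ := by
  refine isChar_of_single hψ.apply_single_one (deg_induction ?_ fun a m ih h => ?_)
  · exact fun h => by rw [one_mul, hψ.apply_single_one, one_mul]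
  · rw [mul_assoc, hψ.apply_single_of_mul hκ, hψ.apply_single_of_mul hκ, Finset.sum_mul]
    refine Finset.sum_congr rfl fun S hS => ?_
    rw [← mul_assoc, ih _ (deg_barMon_gapWords_mul_lt a hS m), mul_assoc]

theorem IsInfChar.precPow_single_eq_zero (hκ : IsInfChar K J κ) {n : ℕ}
    {g : FreeMonoid (Word J)} (hg : deg J g < n) : precPow K J κ n (single g 1) = 0 := by
  induction n generalizing g with
  | zero => omega
  | succ n ih =>
    cases g using FreeMonoid.casesOn with
    | one => exact cprec_single_one _ _
    | of_mul a m =>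
      refine (hκ.cprec_single_of_mul _ a m).trans (Finset.sum_eq_zero fun S hS => ?_)
      have := deg_barMon_gapWords_mul_lt a hS m
      rw [ih (by omega), mul_zero]

theorem IsInfChar.expPrec_single (hκ : IsInfChar K J κ) {g : FreeMonoid (Word J)} {N : ℕ}
    (hN : deg J g < N) :
    expPrec K J κ (single g 1) = ∑ n ∈ Finset.range N, precPow K J κ n (single g 1) := by
  rw [expPrec, extend_single, one_smul]
  refine Finset.sum_subset (Finset.range_subset_range.2 hN) fun n hn hn' => ?_
  simp only [Finset.mem_range, not_lt] at hn hn'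
  exact hκ.precPow_single_eq_zero (by omega)

theorem IsInfChar.precFixedPoint_expPrec (hκ : IsInfChar K J κ) :
    PrecFixedPoint κ (expPrec K J κ) := by
  refine linearForm_ext fun g => ?_
  rw [LinearMap.add_apply, epsL_apply_single]
  cases g using FreeMonoid.casesOn with
  | one =>
    rw [hκ.expPrec_single (N := 1) (by simp [deg_one]), Finset.sum_range_one, precPow,
      epsL_apply_single, cprec_single_one, add_zero]
  | of_mul a m =>
    have h0 : precPow K J κ 0 (single (FreeMonoid.of a * m) 1) = 0 := by
      rw [precPow, epsL_apply_single, if_neg (FreeMonoid.of_mul_ne_one a m)]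
    rw [if_neg (FreeMonoid.of_mul_ne_one a m), zero_add, hκ.cprec_single_of_mul,
      hκ.expPrec_single (Nat.lt_succ_self _), Finset.sum_range_succ', h0, add_zero]
    simp only [precPow, hκ.cprec_single_of_mul]
    rw [Finset.sum_comm]
    refine Finset.sum_congr rfl fun S hS => ?_
    rw [← Finset.mul_sum, hκ.expPrec_single (deg_barMon_gapWords_mul_lt a hS m)]

end FixedPoint

section Logarithm

variable {K : Type} [Field K] {J : Type}

theorem ssubset_of_mem_erase_precIndex {n : ℕ} {S : Finset ℕ}
    (hS : S ∈ (precIndex n).erase (Finset.range n)) : S ⊂ Finset.range n ∧ 0 ∈ S := by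
  obtain ⟨hne, hS⟩ := Finset.mem_erase.1 hS
  obtain ⟨hsub, h0⟩ := mem_precIndex.1 hS
  exact ⟨Finset.ssubset_iff_subset_ne.2 ⟨hsub, hne⟩, h0⟩

/-- At a word `w` the fixed point equation `φ = ε + κ ≺ φ` reads
`φ(w) = κ(w) + ∑_{0 ∈ S ≠ [n]} κ(w_S) φ(w_{J_1}|⋯|w_{J_k})`, which determines `κ(w)`
recursively in the length of `w`. -/
def logPrecWord (φ : DT K J →ₗ[K] K) (w : List J) : K :=
  φ (wordElem K J w) - ∑ S ∈ ((precIndex w.length).erase (Finset.range w.length)).attach,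
    logPrecWord φ (subword J w S) * φ (single (barMon (gapWords w S)) 1)
termination_by w.length
decreasing_by exact length_subword_lt (ssubset_of_mem_erase_precIndex S.2).1

theorem logPrecWord_eq (φ : DT K J →ₗ[K] K) (w : List J) :
    logPrecWord φ w = φ (wordElem K J w)
      - ∑ S ∈ (precIndex w.length).erase (Finset.range w.length),
        logPrecWord φ (subword J w S) * φ (single (barMon (gapWords w S)) 1) := by
  rw [logPrecWord, Finset.sum_attach _
    (fun S => logPrecWord φ (subword J w S) * φ (single (barMon (gapWords w S)) 1))]

def logPrec (φ : DT K J →ₗ[K] K) : DT K J →ₗ[K] K :=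
  extend K J fun g => FreeMonoid.casesOn g 0 fun a m => if m = 1 then logPrecWord φ a.1 else 0

theorem logPrec_wordElem (φ : DT K J →ₗ[K] K) {w : List J} (hw : w ≠ []) :
    logPrec φ (wordElem K J w) = logPrecWord φ w := by
  rw [wordElem_of_ne_nil hw, ← mul_one (FreeMonoid.of _), logPrec, extend_single, one_smul,
    FreeMonoid.casesOn_of_mul, if_pos rfl]

theorem logPrec_isInfChar (φ : DT K J →ₗ[K] K) : IsInfChar K J (logPrec φ) := by
  refine isInfChar_of_single ?_ fun g h hg hh => ?_
  · rw [logPrec, extend_single, one_smul]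
    rfl
  · cases g using FreeMonoid.casesOn with
    | one => exact absurd rfl hg
    | of_mul a m =>
      have hmh : m * h ≠ 1 := fun hmh => hh <| by
        rw [← FreeMonoid.length_eq_zero] at hmh ⊢
        rw [FreeMonoid.length_mul] at hmh
        omega
      rw [logPrec, extend_single, one_smul, mul_assoc, FreeMonoid.casesOn_of_mul, if_neg hmh]

theorem cprec_logPrec_wordElem {φ : DT K J →ₗ[K] K} (hφ : φ (single 1 1) = 1) {w : List J}
    (hw : w ≠ []) : cprec K J (logPrec φ) φ (wordElem K J w) = φ (wordElem K J w) := by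
  rw [(logPrec_isInfChar φ).cprec_wordElem hφ hw, logPrec_wordElem φ hw, logPrecWord_eq,
    sub_add_eq_add_sub, sub_eq_iff_eq_add, add_right_inj]
  refine Finset.sum_congr rfl fun S hS => ?_
  obtain ⟨hsub, h0⟩ := ssubset_of_mem_erase_precIndex hS
  rw [logPrec_wordElem φ (subword_ne_nil w hsub.subset ⟨0, h0⟩)]

theorem IsChar.precFixedPoint_logPrec {φ : DT K J →ₗ[K] K} (hφ : IsChar K J φ) :
    PrecFixedPoint (logPrec φ) φ := by
  have h1 : φ (single 1 1) = 1 := by rw [← one_def]; exact hφ.1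
  refine linearForm_ext fun g => ?_
  rw [LinearMap.add_apply, epsL_apply_single]
  cases g using FreeMonoid.casesOn with
  | one => rw [if_pos rfl, cprec_single_one, add_zero, h1]
  | of_mul a m =>
    rw [if_neg (FreeMonoid.of_mul_ne_one a m), zero_add,
      (logPrec_isInfChar φ).cprec_single_of_mul_of_isChar hφ, ← wordElem_val,
      cprec_logPrec_wordElem h1 a.2, wordElem_val, ← hφ.2, single_mul_single, one_mul]

theorem PrecFixedPoint.eq_logPrec {κ ψ : DT K J →ₗ[K] K} (hκ : IsInfChar K J κ)
    (hψ : PrecFixedPoint κ ψ) : κ = logPrec ψ := by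
  have hword : ∀ w : List J, w ≠ [] → κ (wordElem K J w) = logPrecWord ψ w := by
    intro w
    induction hn : w.length using Nat.strong_induction_on generalizing w with
    | _ n ih =>
      intro hw
      have hfix : ψ (wordElem K J w) = cprec K J κ ψ (wordElem K J w) := by
        conv_lhs => rw [hψ]
        rw [LinearMap.add_apply, epsL, AlgHom.toLinearMap_apply, counit_wordElem, if_neg hw,
          zero_add]
      rw [logPrecWord_eq, hfix, hκ.cprec_wordElem hψ.apply_single_one hw, add_sub_assoc,
        left_eq_add, sub_eq_zero]
      refine Finset.sum_congr rfl fun S hS => ?_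
      obtain ⟨hsub, h0⟩ := ssubset_of_mem_erase_precIndex hS
      rw [ih _ (hn ▸ length_subword_lt hsub) _ rfl (subword_ne_nil w hsub.subset ⟨0, h0⟩)]
  refine hκ.ext (logPrec_isInfChar ψ) fun a => ?_
  rw [← wordElem_val, hword a.1 a.2, logPrec_wordElem ψ a.2]

end Logarithm

/-- The left half-shuffle fixed point equation `φ = ε + κ ≺ φ` gives a
natural bijection between characters and infinitesimal characters on `T̄(T(J))`:
every character `φ` determines a unique infinitesimal character `κ` with
`φ = ε + κ ≺ φ` (equivalently `φ = exp^≺(κ)`), and conversely `exp^≺(κ)` is a character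
for every infinitesimal character `κ`. -/
theorem characters_infinitesimal_characters_bijection :
    -- for every character there is a unique infinitesimal character solving the
    -- fixed point equation
    (∀ φ : DT K J →ₗ[K] K, IsChar K J φ →
      ∃! κ : DT K J →ₗ[K] K, IsInfChar K J κ ∧ φ = epsL K J + cprec K J κ φ)
    ∧ -- the fixed point equation is equivalent to the ordered exponential formula
    (∀ φ κ : DT K J →ₗ[K] K, IsChar K J φ → IsInfChar K J κ →
      (φ = epsL K J + cprec K J κ φ ↔ φ = expPrec K J κ))
    ∧ -- conversely, the ordered exponential of an infinitesimal character is a character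
    (∀ κ : DT K J →ₗ[K] K, IsInfChar K J κ → IsChar K J (expPrec K J κ)) := by
  refine ⟨fun φ hφ => ?_, fun φ κ _ hκ => ?_, fun κ hκ => ?_⟩
  · exact ⟨logPrec φ, ⟨logPrec_isInfChar φ, hφ.precFixedPoint_logPrec⟩,
      fun κ hκ => PrecFixedPoint.eq_logPrec hκ.1 hκ.2⟩
  · exact ⟨fun hfix => PrecFixedPoint.unique hκ hfix hκ.precFixedPoint_expPrec,
      fun h => h ▸ hκ.precFixedPoint_expPrec⟩
  · exact hκ.precFixedPoint_expPrec.isChar hκ
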